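/- Let H = {H_α}_{α∈π} be a finite type Hopf π-coalgebra, λ = (λ_α) a right π-integral for H, and Λ a left integral for H_1 with λ_1(Λ) = 1. Then for every α ∈ π and every k-linear endomorphism f of H_α, Tr(f) = λ_α(S_{α⁻¹}(Λ_{(2,α⁻¹)}) f(Λ_{(1,α)})), where Δ_{α,α⁻¹}(Λ) = Λ_{(1,α)} ⊗ Λ_{(2,α⁻¹)} (summation implicit) and Tr denotes the trace of k-linear endomorphisms. -/

import Mathlib

open TensorProduct

/-- The canonical `k`-linear isomorphism-as-map `H α →ₗ[k] H β` induced by an equality `α = β`. -/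
def Lcast (k : Type*) [CommSemiring k] {π : Type*} (H : π → Type*)
    [∀ α, AddCommMonoid (H α)] [∀ α, Module k (H α)] {α β : π} (h : α = β) :
    H α →ₗ[k] H β := by subst h; exact LinearMap.id

/-- A Hopf `π`-coalgebra over a field `k` (Turaev): a family of `k`-algebras `H α`
with comultiplication `Δ α β : H (α * β) →ₐ[k] H α ⊗[k] H β`, counit `ε : H 1 →ₐ[k] k`
and antipode `S α : H α →ₗ[k] H α⁻¹`, satisfying coassociativity, counit and
antipode axioms. -/
structure HopfGroupCoalgebra (k : Type*) [Field k] (π : Type*) [Group π]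
    (H : π → Type*) [∀ α, Ring (H α)] [∀ α, Algebra k (H α)] where
  Δ : ∀ α β : π, H (α * β) →ₐ[k] TensorProduct k (H α) (H β)
  ε : H (1 : π) →ₐ[k] k
  S : ∀ α : π, H α →ₗ[k] H α⁻¹
  coassoc : ∀ (α β γ : π) (x : H (α * β * γ)),
    (TensorProduct.assoc k (H α) (H β) (H γ))
        (TensorProduct.map (Δ α β).toLinearMap LinearMap.id (Δ (α * β) γ x)) =
      TensorProduct.map LinearMap.id (Δ β γ).toLinearMap
        (Δ α (β * γ) (Lcast k H (mul_assoc α β γ) x))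
  counit_right : ∀ (α : π) (x : H (α * 1)),
    (TensorProduct.rid k (H α))
        (TensorProduct.map LinearMap.id ε.toLinearMap (Δ α 1 x)) =
      Lcast k H (mul_one α) x
  counit_left : ∀ (α : π) (x : H (1 * α)),
    (TensorProduct.lid k (H α))
        (TensorProduct.map ε.toLinearMap LinearMap.id (Δ 1 α x)) =
      Lcast k H (one_mul α) x
  antipode_left : ∀ (α : π) (x : H (α⁻¹ * α)),
    (LinearMap.mul' k (H α))
        (TensorProduct.map ((Lcast k H (inv_inv α)).comp (S α⁻¹)) LinearMap.id (Δ α⁻¹ α x)) =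
      ε (Lcast k H (inv_mul_cancel α) x) • (1 : H α)
  antipode_right : ∀ (α : π) (x : H (α * α⁻¹)),
    (LinearMap.mul' k (H α))
        (TensorProduct.map LinearMap.id ((Lcast k H (inv_inv α)).comp (S α⁻¹)) (Δ α α⁻¹ x)) =
      ε (Lcast k H (mul_inv_cancel α) x) • (1 : H α)


/-!
The element `u = Δ_{α,α⁻¹}(Λ)` is a copairing for the form `⟨x, y⟩ = λ_α(x y)` twisted by the
antipode: `λ_α(x Λ_{(1,α)}) S(Λ_{(2,α⁻¹)}) = λ_1(Λ) x`. To see this, expand `λ_α(x Λ_{(1,α)})`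
through `Δ_{1,α}` using the right integral, use coassociativity to bring in
`Λ_{(2,α)} S(Λ_{(3,α⁻¹)}) = ε(Λ_{(2,1)})`, collapse with the counit, and let the left integral `Λ`
absorb `x_{(1,1)}`. A copairing makes the form nondegenerate, so in finite dimension the identity
map is also `z ↦ λ_α(S(Λ_{(2,α⁻¹)}) z) Λ_{(1,α)}`; composing it with `f` and taking the trace
gives the formula.
-/

section Copairing

variable {k V W : Type*} [Field k] [AddCommGroup V] [Module k V] [AddCommGroup W] [Module k W]

abbrev IsCopairing (B : V →ₗ[k] V →ₗ[k] k) (g : W →ₗ[k] V) (u : V ⊗[k] W) : Prop :=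
  ∀ x, TensorProduct.lid k V (map (B x) g u) = x

variable {B : V →ₗ[k] V →ₗ[k] k} {g : W →ₗ[k] V}

theorem apply_dualTensorHom_map_comm (u : V ⊗[k] W) (y z : V) :
    B y (dualTensorHom k V V (map (B ∘ₗ g) LinearMap.id (TensorProduct.comm k V W u)) z) =
      B (TensorProduct.lid k V (map (B y) g u)) z := by
  induction u using TensorProduct.induction_on with
  | zero => simp
  | tmul a b => simp [mul_comm]
  | add u₁ u₂ h₁ h₂ => simp only [map_add, LinearMap.add_apply, h₁, h₂]

theorem trace_comp_dualTensorHom_map_comm [FiniteDimensional k V] (f : V →ₗ[k] V)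
    (u : V ⊗[k] W) :
    LinearMap.trace k V
        (f ∘ₗ dualTensorHom k V V (map (B ∘ₗ g) LinearMap.id (TensorProduct.comm k V W u))) =
      lift B (TensorProduct.comm k V V (map f g u)) := by
  induction u using TensorProduct.induction_on with
  | zero => simp
  | tmul a b =>
    have hcomp : f ∘ₗ dualTensorHom k V V (B (g b) ⊗ₜ a) =
        dualTensorHom k V V (B (g b) ⊗ₜ f a) := by
      ext; simp
    simp [hcomp, LinearMap.trace_eq_contract_apply]
  | add u₁ u₂ h₁ h₂ => simp only [map_add, LinearMap.comp_add, h₁, h₂]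

namespace IsCopairing

variable {u : V ⊗[k] W}

theorem injective (hu : IsCopairing B g u) : Function.Injective B :=
  (injective_iff_map_eq_zero B).mpr fun x hx => by simpa [hx] using (hu x).symm

theorem dualTensorHom_eq_id [FiniteDimensional k V] (hu : IsCopairing B g u) :
    dualTensorHom k V V (map (B ∘ₗ g) LinearMap.id (TensorProduct.comm k V W u)) =
      LinearMap.id := by
  have hflip : Function.Injective B.flip := LinearMap.flip_injective_iff₁.mpr
    ((LinearMap.injective_iff_surjective_of_finrank_eq_finrank
      Subspace.dual_finrank_eq.symm).mp hu.injective)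
  ext z
  exact hflip (LinearMap.ext fun y => by
    rw [LinearMap.flip_apply, LinearMap.flip_apply, apply_dualTensorHom_map_comm, hu y,
      LinearMap.id_apply])

theorem trace_eq [FiniteDimensional k V] (hu : IsCopairing B g u) (f : V →ₗ[k] V) :
    LinearMap.trace k V f = lift B (TensorProduct.comm k V V (map f g u)) := by
  rw [← trace_comp_dualTensorHom_map_comm, hu.dualTensorHom_eq_id, LinearMap.comp_id]

end IsCopairing

end Copairing

section Slice

variable {k A B : Type*} [CommSemiring k] [Semiring A] [Algebra k A] [Semiring B] [Algebra k B]

noncomputable def sliceLeft (φ : A →ₗ[k] k) : A ⊗[k] B →ₗ[k] B :=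
  (TensorProduct.lid k B).toLinearMap ∘ₗ φ.rTensor B

@[simp] theorem sliceLeft_tmul (φ : A →ₗ[k] k) (a : A) (b : B) :
    sliceLeft φ (a ⊗ₜ[k] b) = φ a • b := rfl

theorem sliceLeft_mul_tmul (φ : A →ₗ[k] k) (t : A ⊗[k] B) (a : A) (b : B) :
    sliceLeft φ (t * (a ⊗ₜ[k] b)) = sliceLeft φ (t * (a ⊗ₜ[k] 1)) * b := by
  induction t using TensorProduct.induction_on with
  | zero => simp
  | tmul c d => simp [Algebra.TensorProduct.tmul_mul_tmul]
  | add t₁ t₂ h₁ h₂ => simp only [add_mul, map_add, h₁, h₂]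

noncomputable def sliceLeftMul (φ : A →ₗ[k] k) (t : A ⊗[k] B) : A →ₗ[k] B :=
  sliceLeft φ ∘ₗ LinearMap.mulLeft k t ∘ₗ (TensorProduct.mk k A B).flip 1

@[simp] theorem sliceLeftMul_apply (φ : A →ₗ[k] k) (t : A ⊗[k] B) (a : A) :
    sliceLeftMul φ t a = sliceLeft φ (t * (a ⊗ₜ[k] 1)) := rfl

theorem mul_tmul_one_of_left_integral (ε : A →ₐ[k] k) {Λ : A} (hΛ : ∀ a, a * Λ = ε a • Λ)
    (t : A ⊗[k] B) :
    t * (Λ ⊗ₜ[k] 1) = Λ ⊗ₜ[k] TensorProduct.lid k B (ε.toLinearMap.rTensor B t) := by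
  induction t using TensorProduct.induction_on with
  | zero => simp
  | tmul a b => simp [Algebra.TensorProduct.tmul_mul_tmul, hΛ, smul_tmul]
  | add t₁ t₂ h₁ h₂ => simp only [add_mul, map_add, h₁, h₂, tmul_add]

end Slice

section Lcast

variable {k : Type*} [CommSemiring k] {π : Type*} {H : π → Type*}
  [∀ α, AddCommMonoid (H α)] [∀ α, Module k (H α)]

@[simp] theorem Lcast_rfl {α : π} (h : α = α) : Lcast k H h = LinearMap.id := rfl

@[simp] theorem Lcast_Lcast {α β γ : π} (h : α = β) (h' : β = γ) (x : H α) :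
    Lcast k H h' (Lcast k H h x) = Lcast k H (h.trans h') x := by
  subst h h'; rfl

theorem apply_Lcast {M : Type*} [AddCommMonoid M] [Module k M] (F : ∀ α, H α →ₗ[k] M)
    {α β : π} (h : α = β) (x : H α) : F β (Lcast k H h x) = F α x := by
  subst h; rfl

end Lcast

theorem Lcast_mul {k : Type*} [CommSemiring k] {π : Type*} {H : π → Type*}
    [∀ α, Semiring (H α)] [∀ α, Algebra k (H α)] {α β : π} (h : α = β) (x y : H α) :
    Lcast k H h (x * y) = Lcast k H h x * Lcast k H h y := by
  subst h; rfl

namespace HopfGroupCoalgebra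

variable {k : Type*} [Field k] {π : Type*} [Group π] {H : π → Type*}
  [∀ α, Ring (H α)] [∀ α, Algebra k (H α)] (Hc : HopfGroupCoalgebra k π H)

theorem Δ_Lcast_left {β β' δ : π} (h : β = β') (hp : β * δ = β' * δ) (x : H (β * δ)) :
    Hc.Δ β' δ (Lcast k H hp x) = (Lcast k H h).rTensor (H δ) (Hc.Δ β δ x) := by
  subst h; simp

theorem lid_rTensor_ε_Δ {α : π} (x : H α) :
    TensorProduct.lid k (H α)
      (Hc.ε.toLinearMap.rTensor (H α) (Hc.Δ 1 α (Lcast k H (one_mul α).symm x))) = x := by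
  rw [LinearMap.rTensor, Hc.counit_left, Lcast_Lcast, Lcast_rfl, LinearMap.id_apply]

theorem rid_lTensor_ε_Δ {β : π} (h : β = 1) (x : H (1 * β)) :
    TensorProduct.rid k (H 1)
      ((Hc.ε.toLinearMap ∘ₗ Lcast k H h).lTensor (H 1) (Hc.Δ 1 β x)) =
      Lcast k H (by rw [h, one_mul]) x := by
  subst h
  exact Hc.counit_right 1 x

noncomputable def antipodeAtInv (α : π) : H α⁻¹ →ₗ[k] H α :=
  Lcast k H (inv_inv α) ∘ₗ Hc.S α⁻¹

noncomputable def antipodeSlice (φ : H 1 →ₗ[k] k) {α : π} (t : H 1 ⊗[k] H α) :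
    H 1 ⊗[k] (H α ⊗[k] H α⁻¹) →ₗ[k] H α :=
  LinearMap.mul' k (H α) ∘ₗ
    map (sliceLeftMul φ t) (LinearMap.mul' k (H α) ∘ₗ (Hc.antipodeAtInv α).lTensor (H α))

theorem antipodeSlice_assoc_tmul (φ : H 1 →ₗ[k] k) {α : π} (t s : H 1 ⊗[k] H α) (q : H α⁻¹) :
    Hc.antipodeSlice φ t (TensorProduct.assoc k _ _ _ (s ⊗ₜ[k] q)) =
      sliceLeft φ (t * s) * Hc.antipodeAtInv α q := by
  induction s using TensorProduct.induction_on with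
  | zero => simp
  | tmul d e => simp [antipodeSlice, sliceLeft_mul_tmul φ t d e, mul_assoc]
  | add s₁ s₂ h₁ h₂ => simp only [add_tmul, map_add, mul_add, add_mul, h₁, h₂]

theorem antipodeSlice_lTensor_Δ (φ : H 1 →ₗ[k] k) {α : π} (t : H 1 ⊗[k] H α) :
    Hc.antipodeSlice φ t ∘ₗ (Hc.Δ α α⁻¹).toLinearMap.lTensor (H 1) =
      sliceLeftMul φ t ∘ₗ (TensorProduct.rid k (H 1)).toLinearMap ∘ₗ
        (Hc.ε.toLinearMap ∘ₗ Lcast k H (mul_inv_cancel α)).lTensor (H 1) := by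
  refine TensorProduct.ext' fun d w => ?_
  have hS : LinearMap.mul' k (H α) ((Hc.antipodeAtInv α).lTensor (H α) (Hc.Δ α α⁻¹ w)) =
      Hc.ε (Lcast k H (mul_inv_cancel α) w) • 1 := Hc.antipode_right α w
  simp [antipodeSlice, hS]

abbrev IsRightIntegral (lam : ∀ α : π, H α →ₗ[k] k) : Prop :=
  ∀ (α β : π) (x : H (α * β)), sliceLeft (lam α) (Hc.Δ α β x) = lam (α * β) x • (1 : H β)

variable {lam : ∀ α : π, H α →ₗ[k] k}

theorem antipodeSlice_assoc_rTensor_Δ (hlam : Hc.IsRightIntegral lam) {α : π} (x : H α) :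
    Hc.antipodeSlice (lam 1) (Hc.Δ 1 α (Lcast k H (one_mul α).symm x)) ∘ₗ
        (TensorProduct.assoc k _ _ _).toLinearMap ∘ₗ (Hc.Δ 1 α).toLinearMap.rTensor (H α⁻¹) =
      (TensorProduct.lid k (H α)).toLinearMap ∘ₗ
        map (lam α ∘ₗ LinearMap.mulLeft k x) (Hc.antipodeAtInv α) ∘ₗ
        (Lcast k H (one_mul α)).rTensor (H α⁻¹) := by
  refine TensorProduct.ext' fun y q => ?_
  have hcast : lam (1 * α) (Lcast k H (one_mul α).symm x * y) =
      lam α (x * Lcast k H (one_mul α) y) := by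
    rw [← apply_Lcast lam (one_mul α), Lcast_mul, Lcast_Lcast, Lcast_rfl, LinearMap.id_apply]
  simp only [LinearMap.comp_apply, LinearEquiv.coe_toLinearMap, LinearMap.rTensor_tmul,
    AlgHom.toLinearMap_apply, antipodeSlice_assoc_tmul, ← map_mul, hlam 1 α, hcast]
  simp

theorem lid_map_mulLeft_antipodeAtInv_Δ (hlam : Hc.IsRightIntegral lam)
    {Λ : H 1} (hΛ : ∀ x : H 1, x * Λ = Hc.ε x • Λ) {α : π} (x : H α) :
    TensorProduct.lid k (H α) (map (lam α ∘ₗ LinearMap.mulLeft k x) (Hc.antipodeAtInv α)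
      (Hc.Δ α α⁻¹ (Lcast k H (mul_inv_cancel α).symm Λ))) = lam 1 Λ • x := by
  set t := Hc.Δ 1 α (Lcast k H (one_mul α).symm x)
  have e : (1 : π) = 1 * α * α⁻¹ := by group
  have hT : Hc.Δ α α⁻¹ (Lcast k H (mul_inv_cancel α).symm Λ) =
      (Lcast k H (one_mul α)).rTensor _ (Hc.Δ (1 * α) α⁻¹ (Lcast k H e Λ)) := by
    rw [← Hc.Δ_Lcast_left (one_mul α) (by group), Lcast_Lcast]
  -- evaluate `antipodeSlice (lam 1) t` on the two sides of `(Δ ⊗ id) Δ Λ = (id ⊗ Δ) Δ Λ`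
  calc _ = Hc.antipodeSlice (lam 1) t (TensorProduct.assoc k _ _ _
          ((Hc.Δ 1 α).toLinearMap.rTensor _ (Hc.Δ (1 * α) α⁻¹ (Lcast k H e Λ)))) := by
        rw [hT]
        exact (LinearMap.congr_fun (Hc.antipodeSlice_assoc_rTensor_Δ hlam x) _).symm
    _ = Hc.antipodeSlice (lam 1) t ((Hc.Δ α α⁻¹).toLinearMap.lTensor _
          (Hc.Δ 1 (α * α⁻¹) (Lcast k H (mul_assoc 1 α α⁻¹) (Lcast k H e Λ)))) :=
        congrArg _ (Hc.coassoc 1 α α⁻¹ _)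
    _ = sliceLeftMul (lam 1) t Λ := by
        rw [← LinearMap.comp_apply (Hc.antipodeSlice _ _), antipodeSlice_lTensor_Δ]
        simp only [LinearMap.comp_apply, LinearEquiv.coe_toLinearMap, rid_lTensor_ε_Δ,
          Lcast_Lcast, Lcast_rfl, LinearMap.id_apply]
    _ = lam 1 Λ • x := by
        rw [sliceLeftMul_apply, mul_tmul_one_of_left_integral Hc.ε hΛ, sliceLeft_tmul,
          lid_rTensor_ε_Δ]

theorem isCopairing_Δ_integral (hlam : Hc.IsRightIntegral lam)
    {Λ : H 1} (hΛ : ∀ x : H 1, x * Λ = Hc.ε x • Λ) (hnorm : lam 1 Λ = 1) (α : π) :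
    IsCopairing ((LinearMap.mul k (H α)).compr₂ (lam α)) (Hc.antipodeAtInv α)
      (Hc.Δ α α⁻¹ (Lcast k H (mul_inv_cancel α).symm Λ)) := fun x =>
  (Hc.lid_map_mulLeft_antipodeAtInv_Δ hlam hΛ x).trans (by rw [hnorm, one_smul])

end HopfGroupCoalgebra

/-- Let `H` be a finite type Hopf `π`-coalgebra, `λ = (λ_α)` a right `π`-integral for `H`
and `Λ` a left integral for `H 1` with `λ_1 Λ = 1`.  Then for every `α` and every
`k`-linear endomorphism `f` of `H α`,
`Tr f = λ_α (S_{α⁻¹}(Λ_{(2,α⁻¹)}) * f (Λ_{(1,α)}))`. -/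
theorem trace_formula (k : Type*) [Field k] (π : Type*) [Group π]
    (H : π → Type*) [∀ α, Ring (H α)] [∀ α, Algebra k (H α)]
    [∀ α, FiniteDimensional k (H α)]
    (Hc : HopfGroupCoalgebra k π H)
    (lam : ∀ α : π, H α →ₗ[k] k)
    (hlam : ∀ (α β : π) (x : H (α * β)),
      (TensorProduct.lid k (H β))
          (TensorProduct.map (lam α) LinearMap.id (Hc.Δ α β x)) =
        lam (α * β) x • (1 : H β))
    (Λ : H (1 : π))
    (hΛ : ∀ x : H (1 : π), x * Λ = Hc.ε x • Λ)
    (hnorm : lam 1 Λ = 1) :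
    ∀ (α : π) (f : H α →ₗ[k] H α),
      LinearMap.trace k (H α) f =
        lam α ((TensorProduct.lift (LinearMap.mul k (H α)))
          ((TensorProduct.comm k (H α) (H α))
            (TensorProduct.map f ((Lcast k H (inv_inv α)).comp (Hc.S α⁻¹))
              (Hc.Δ α α⁻¹ (Lcast k H (mul_inv_cancel α).symm Λ))))) := by
  intro α f
  rw [(Hc.isCopairing_Δ_integral hlam hΛ hnorm α).trace_eq f, TensorProduct.lift_compr₂]
  rfl
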